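/- arXiv:2210.00999 — 3 statements merged into one kernel-verified Lean document; each statement's English description precedes it below -/
import Mathlib

section
/- Let $\pi(a)=\int \pi(a|s)q(s)\,ds$ with posterior $p(s|a)=\pi(a|s)q(s)/\pi(a)$. For any positive integer $K$, the function $w(s^{(0:K)}\mid a) := \dfrac{p(s^{(0)}|a)\prod_{k=1}^{K} q(s^{(k)})}{\frac{1}{K+1}\sum_{k=0}^{K} \frac{p(s^{(k)}|a)}{q(s^{(k)})}}$ is a normalized probability density in $(s^{(0)},\ldots,s^{(K)})$, i.e. $\int w(s^{(0:K)}\mid a)\, ds^{(0)}\cdots ds^{(K)} = 1$. -/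
/-!
Write `g_j(s) = f(s_j) / (∑_k f(s_k)) · ∏_k q(s_k)`, the density of drawing `K + 1` independent
samples from `q` and then selecting index `j` with probability proportional to `f`. In terms of
`f = π(a|·)` the weight is `w = (K + 1) g_0`, since `πa` cancels between numerator and denominator.
The `g_j` sum to `∏_k q(s_k)`, whose integral is `1`, and permuting the coordinates (which preserves
the product measure) shows that all `g_j` have the same integral; hence `∫ g_0 = 1 / (K + 1)`.
-/

open MeasureTheory Real

theorem MeasureTheory.integral_pi_comp_perm {ι S : Type*} [Fintype ι] [MeasurableSpace S]
    (μ : Measure S) [SigmaFinite μ] (σ : Equiv.Perm ι) (F : (ι → S) → ℝ) :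
    ∫ x, F (fun i => x (σ i)) ∂Measure.pi (fun _ => μ) = ∫ x, F x ∂Measure.pi (fun _ => μ) := by
  refine Eq.trans ?_ ((measurePreserving_piCongrLeft (fun _ : ι => μ) σ.symm).integral_comp' F)
  refine integral_congr_ae (.of_forall fun x => congrArg F ?_)
  funext i
  simp [MeasurableEquiv.coe_piCongrLeft, Equiv.piCongrLeft_apply_eq_cast]

section SelectionDensity

variable {ι S : Type*} [Fintype ι]

noncomputable def selectionDensity (f q : S → ℝ) (j : ι) (x : ι → S) : ℝ :=
  f (x j) / (∑ k, f (x k)) * ∏ k, q (x k)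

variable {f q : S → ℝ}

theorem selectionDensity_comp_perm (σ : Equiv.Perm ι) (j : ι) (x : ι → S) :
    selectionDensity f q j (fun i => x (σ i)) = selectionDensity f q (σ j) x := by
  simp only [selectionDensity, Equiv.sum_comp σ (fun k => f (x k)),
    Equiv.prod_comp σ (fun k => q (x k))]

theorem sum_selectionDensity [Nonempty ι] (hf : ∀ s, 0 < f s) (x : ι → S) :
    ∑ j, selectionDensity f q j x = ∏ k, q (x k) := by
  have hsum : (∑ k, f (x k)) ≠ 0 := (Finset.sum_pos (fun k _ => hf (x k)) Finset.univ_nonempty).ne'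
  simp only [selectionDensity, ← Finset.sum_mul, ← Finset.sum_div, div_self hsum, one_mul]

theorem norm_selectionDensity_le (hf : ∀ s, 0 ≤ f s) (j : ι) (x : ι → S) :
    ‖selectionDensity f q j x‖ ≤ ‖∏ k, q (x k)‖ := by
  have hfj : 0 ≤ f (x j) := hf _
  have hle : f (x j) ≤ ∑ k, f (x k) :=
    Finset.single_le_sum (fun k _ => hf (x k)) (Finset.mem_univ j)
  rw [selectionDensity, norm_mul]
  refine mul_le_of_le_one_left (norm_nonneg _) ?_
  rw [norm_of_nonneg (div_nonneg hfj (hfj.trans hle))]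
  exact div_le_one_of_le₀ hle (hfj.trans hle)

variable [MeasurableSpace S] (μ : Measure S) [SigmaFinite μ]

theorem integrable_selectionDensity (hf : ∀ s, 0 ≤ f s) (hf_meas : Measurable f)
    (hq_meas : Measurable q) (hq_int : Integrable q μ) (j : ι) :
    Integrable (selectionDensity f q j) (Measure.pi fun _ => μ) := by
  refine (Integrable.fintype_prod fun _ => hq_int).mono ?_
    (.of_forall fun x => norm_selectionDensity_le hf j x)
  refine Measurable.aestronglyMeasurable ?_
  unfold selectionDensity
  fun_prop

theorem integral_selectionDensity_eq (j j' : ι) :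
    ∫ x, selectionDensity f q j x ∂Measure.pi (fun _ => μ) =
      ∫ x, selectionDensity f q j' x ∂Measure.pi (fun _ => μ) := by
  classical
  rw [← integral_pi_comp_perm μ (Equiv.swap j' j)]
  simp only [selectionDensity_comp_perm, Equiv.swap_apply_right]

theorem card_mul_integral_selectionDensity [Nonempty ι] (hf : ∀ s, 0 < f s)
    (hf_meas : Measurable f) (hq_meas : Measurable q) (hq_int : Integrable q μ) (j : ι) :
    Fintype.card ι * ∫ x, selectionDensity f q j x ∂Measure.pi (fun _ => μ) =
      (∫ s, q s ∂μ) ^ Fintype.card ι := by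
  calc Fintype.card ι * ∫ x, selectionDensity f q j x ∂Measure.pi (fun _ => μ)
      = ∑ j', ∫ x, selectionDensity f q j' x ∂Measure.pi (fun _ => μ) := by
        rw [Finset.sum_congr rfl fun j' _ => integral_selectionDensity_eq μ j' j]
        simp
    _ = ∫ x, ∏ k, q (x k) ∂Measure.pi (fun _ => μ) := by
        rw [← integral_finsetSum _ fun j' _ =>
          integrable_selectionDensity μ (fun s => (hf s).le) hf_meas hq_meas hq_int j']
        exact integral_congr_ae (.of_forall (sum_selectionDensity hf))
    _ = (∫ s, q s ∂μ) ^ Fintype.card ι := integral_fintype_prod_eq_pow q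

end SelectionDensity

theorem w_is_normalized_density_general
    {S : Type*} [MeasurableSpace S]
    (νS : Measure S) [SigmaFinite νS]
    (q : S → ℝ) (f : S → ℝ)  -- `f s` is `π(a|s)` for the fixed action `a`
    (hq_pos : ∀ s, 0 < q s) (hf_pos : ∀ s, 0 < f s)
    (hq_meas : Measurable q) (hf_meas : Measurable f)
    (hq_norm : ∫ s, q s ∂νS = 1)
    (πa : ℝ) (hπa_pos : 0 < πa)
    (post : S → ℝ) (hpost : ∀ s, post s = f s * q s / πa)
    (K : ℕ)
    (w : (Fin (K + 1) → S) → ℝ)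
    (hw : ∀ sv, w sv =
      (post (sv 0) * ∏ k ∈ Finset.univ.erase (0 : Fin (K + 1)), q (sv k)) /
        ((1 / (K + 1 : ℝ)) * ∑ k : Fin (K + 1), post (sv k) / q (sv k))) :
    ∫ sv, w sv ∂(Measure.pi fun _ : Fin (K + 1) => νS) = 1 := by
  have hq_int : Integrable q νS := .of_integral_ne_zero (by simp [hq_norm])
  have hw_eq : w = fun sv => (K + 1 : ℝ) * selectionDensity f q 0 sv := by
    funext sv
    have hratio : ∀ k, post (sv k) / q (sv k) = f (sv k) / πa := fun k => by
      rw [hpost]; field_simp [(hq_pos (sv k)).ne']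
    rw [hw, Finset.sum_congr rfl fun k _ => hratio k, ← Finset.sum_div, hpost, selectionDensity,
      ← Finset.mul_prod_erase _ _ (Finset.mem_univ 0)]
    field_simp [hπa_pos.ne']
  have hint := card_mul_integral_selectionDensity νS hf_pos hf_meas hq_meas hq_int (0 : Fin (K + 1))
  rw [hq_norm, one_pow, Fintype.card_fin] at hint
  rw [hw_eq, integral_const_mul]
  exact_mod_cast hint

/-- The self-normalized importance weighting density
`w(s⁰⁻ᴷ | a) = p(s⁰|a) ∏_{k=1}^K q(sᵏ) / ((1/(K+1)) ∑_k p(sᵏ|a)/q(sᵏ))`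
is a normalized probability density over the tuple `(s⁰, …, sᴷ)`. -/
theorem w_is_normalized_density
    {S : Type*} [MeasurableSpace S]
    (νS : Measure S) [SigmaFinite νS]
    (q : S → ℝ) (f : S → ℝ)  -- `f s` is `π(a|s)` for the fixed action `a`
    (hq_pos : ∀ s, 0 < q s) (hf_pos : ∀ s, 0 < f s)
    (hq_meas : Measurable q) (hf_meas : Measurable f)
    (hq_norm : ∫ s, q s ∂νS = 1)
    (πa : ℝ) (hπa : πa = ∫ s, f s * q s ∂νS) (hπa_pos : 0 < πa)
    (post : S → ℝ) (hpost : ∀ s, post s = f s * q s / πa)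
    (K : ℕ) (hK : 0 < K)
    (w : (Fin (K + 1) → S) → ℝ)
    (hw : ∀ sv, w sv =
      (post (sv 0) * ∏ k ∈ Finset.univ.erase (0 : Fin (K + 1)), q (sv k)) /
        ((1 / (K + 1 : ℝ)) * ∑ k : Fin (K + 1), post (sv k) / q (sv k))) :
    ∫ sv, w sv ∂(Measure.pi fun _ : Fin (K + 1) => νS) = 1 :=
  w_is_normalized_density_general νS q f hq_pos hf_pos hq_meas hf_meas hq_norm πa hπa_pos post hpost
    K w hw
end

section
/- The function $v(s^{(0:K+1)}\mid a) := p(s^{(0)}|a)\,\prod_{k=1}^{K+1} q(s^{(k)})\cdot \frac{\frac{1}{K+2}\sum_{k=0}^{K+1}\pi(a|s^{(k)})}{\frac{1}{K+1}\sum_{k=0}^{K}\pi(a|s^{(k)})}$ integrates to $1$ over $(s^{(0)},\ldots,s^{(K+1)})$, i.e. it is a normalized probability density. -/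
/-!
Write `v x = (K + 1) / ((K + 2) π(a)) · Q x · R x · f (x 0)`, where `Q x = ∏ᵢ q (xᵢ)` and
`R = sumRatio f` is the sum of all `K + 2` likelihoods divided by the sum of the first `K + 1`.
Both `Q` and `R` are invariant under permutations of the first `K + 1` coordinates, and these
preserve the product measure, so `∫ Q R f (xⱼ)` does not depend on `j ≤ K`. Summing over `j`
cancels the denominator of `R`, and `∫ Q ∑ₖ f (xₖ) = (K + 2) π(a)` because every summand
integrates to `∫ f q = π(a)`. Hence `(K + 1) ∫ Q R f (x 0) = (K + 2) π(a)`.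
-/

open MeasureTheory Finset

theorem prod_mul_apply_eq_prod_update {ι S : Type*} [Fintype ι] [DecidableEq ι] (q f : S → ℝ)
    (k : ι) (x : ι → S) :
    (∏ i, q (x i)) * f (x k)
      = ∏ i, Function.update (fun _ => q) k (fun s => f s * q s) i (x i) := by
  rw [← mul_prod_erase univ (fun i => q (x i)) (mem_univ k),
    ← mul_prod_erase univ _ (mem_univ k), Function.update_self]
  simp_rw [prod_congr rfl fun i (hi : i ∈ univ.erase k) =>
    congrFun (Function.update_of_ne (ne_of_mem_erase hi) (fun s => f s * q s) fun _ => q) (x i)]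
  ring

section ProductMeasure

variable {ι S : Type*} [Fintype ι] [MeasurableSpace S] {ν : Measure S} [SigmaFinite ν]

theorem integral_comp_perm {E : Type*} [NormedAddCommGroup E] [NormedSpace ℝ E]
    (e : Equiv.Perm ι) (F : (ι → S) → E) :
    ∫ x, F (x ∘ e) ∂(Measure.pi fun _ => ν) = ∫ x, F x ∂(Measure.pi fun _ => ν) := by
  have hcomp : ⇑(MeasurableEquiv.piCongrLeft (fun _ : ι => S) e.symm) = fun x => x ∘ e := by
    funext x i
    simpa using MeasurableEquiv.piCongrLeft_apply_apply (β := fun _ : ι => S) e.symm x (e i)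
  simpa only [hcomp] using
    (measurePreserving_piCongrLeft (fun _ : ι => ν) e.symm).integral_comp' F

theorem integral_mul_sum_apply_eq_card_mul [DecidableEq ι] (J : Finset ι)
    (W : (ι → S) → ℝ) (f : S → ℝ)
    (hW : ∀ i ∈ J, ∀ j ∈ J, ∀ x, W (x ∘ Equiv.swap i j) = W x)
    (hint : ∀ j ∈ J, Integrable (fun x => W x * f (x j)) (Measure.pi fun _ => ν))
    {i : ι} (hi : i ∈ J) :
    ∫ x, W x * ∑ j ∈ J, f (x j) ∂(Measure.pi fun _ => ν)
      = #J * ∫ x, W x * f (x i) ∂(Measure.pi fun _ => ν) := by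
  have hswap : ∀ j ∈ J, ∫ x, W x * f (x j) ∂(Measure.pi fun _ => ν)
      = ∫ x, W x * f (x i) ∂(Measure.pi fun _ => ν) := fun j hj => by
    rw [← integral_comp_perm (Equiv.swap i j)]
    simp only [Function.comp_apply, hW i hi j hj, Equiv.swap_apply_right]
  simp_rw [mul_sum]
  rw [integral_finsetSum J hint, sum_congr rfl hswap, sum_const, nsmul_eq_mul]

variable [DecidableEq ι] {q f : S → ℝ}

theorem integrable_prod_mul_apply (hq : Integrable q ν) (hfq : Integrable (fun s => f s * q s) ν)
    (k : ι) : Integrable (fun x => (∏ i, q (x i)) * f (x k)) (Measure.pi fun _ => ν) := by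
  simp_rw [prod_mul_apply_eq_prod_update q f k]
  refine Integrable.fintype_prod fun i => ?_
  rcases eq_or_ne i k with rfl | hik
  · simpa using hfq
  · simpa [Function.update_of_ne hik] using hq

theorem integral_prod_mul_apply (hq : ∫ s, q s ∂ν = 1) (k : ι) :
    ∫ x, (∏ i, q (x i)) * f (x k) ∂(Measure.pi fun _ => ν) = ∫ s, f s * q s ∂ν := by
  simp_rw [prod_mul_apply_eq_prod_update q f k]
  rw [integral_fintype_prod_eq_prod, ← mul_prod_erase univ _ (mem_univ k), Function.update_self,
    prod_eq_one fun i hi => by rw [Function.update_of_ne (ne_of_mem_erase hi), hq], mul_one]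

theorem integral_prod_mul_sum_apply (hq1 : ∫ s, q s ∂ν = 1) (hq : Integrable q ν)
    (hfq : Integrable (fun s => f s * q s) ν) :
    ∫ x : ι → S, (∏ i, q (x i)) * ∑ k, f (x k) ∂(Measure.pi fun _ => ν)
      = Fintype.card ι * ∫ s, f s * q s ∂ν := by
  simp_rw [mul_sum]
  rw [integral_finsetSum _ fun k _ => integrable_prod_mul_apply hq hfq k,
    sum_congr rfl fun k _ => integral_prod_mul_apply hq1 k, sum_const, card_univ, nsmul_eq_mul]

end ProductMeasure

theorem Fin.sum_comp_perm_castSucc {M : Type*} [AddCancelCommMonoid M] {n : ℕ}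
    (e : Equiv.Perm (Fin (n + 1))) (he : e (Fin.last n) = Fin.last n) (g : Fin (n + 1) → M) :
    ∑ k : Fin n, g (e k.castSucc) = ∑ k : Fin n, g k.castSucc := by
  have h := Fin.sum_univ_castSucc fun k => g (e k)
  rw [Equiv.sum_comp e g, Fin.sum_univ_castSucc g, he] at h
  exact (add_right_cancel h).symm

section SumRatio

variable {S : Type*} {n : ℕ}

noncomputable def sumRatio (f : S → ℝ) (x : Fin (n + 1) → S) : ℝ :=
  (∑ k, f (x k)) / ∑ k : Fin n, f (x k.castSucc)

theorem sumRatio_comp_perm (f : S → ℝ) (x : Fin (n + 1) → S) {e : Equiv.Perm (Fin (n + 1))}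
    (he : e (Fin.last n) = Fin.last n) : sumRatio f (x ∘ e) = sumRatio f x := by
  simp only [sumRatio, Function.comp_apply, Equiv.sum_comp e fun k => f (x k),
    Fin.sum_comp_perm_castSucc e he fun k => f (x k)]

theorem sum_castSucc_mul_sumRatio [NeZero n] {f : S → ℝ} (hf : ∀ s, 0 < f s)
    (x : Fin (n + 1) → S) :
    (∑ k : Fin n, f (x k.castSucc)) * sumRatio f x = ∑ k, f (x k) :=
  mul_div_cancel₀ _ (sum_pos (fun _ _ => hf _) univ_nonempty).ne'

theorem integrable_prod_mul_sumRatio_mul_apply [MeasurableSpace S] {ν : Measure S}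
    [SigmaFinite ν] {q f : S → ℝ} (hq : Integrable q ν)
    (hfq : Integrable (fun s => f s * q s) ν) (hf : Measurable f) (hf_pos : ∀ s, 0 < f s)
    (j : Fin n) :
    Integrable (fun x => (∏ i, q (x i)) * sumRatio f x * f (x j.castSucc))
      (Measure.pi fun _ => ν) := by
  have hQf := integrable_prod_mul_apply hq hfq j.castSucc
  have hratio : Measurable (sumRatio (n := n) f) := by
    unfold sumRatio
    fun_prop
  refine ((hQf.norm.add (integrable_prod_mul_apply hq hfq (Fin.last n)).norm).mono'
      ?_ (ae_of_all _ fun x => ?_))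
  · refine (hQf.aestronglyMeasurable.mul hratio.aestronglyMeasurable).congr
      (ae_of_all _ fun x => ?_)
    simp only [Pi.mul_apply]
    ring
  have hB : 0 < ∑ k : Fin n, f (x k.castSucc) :=
    sum_pos (fun _ _ => hf_pos _) ⟨j, mem_univ j⟩
  have hfj : f (x j.castSucc) ≤ ∑ k : Fin n, f (x k.castSucc) :=
    single_le_sum (f := fun k => f (x k.castSucc)) (fun _ _ => (hf_pos _).le) (mem_univ j)
  have hweight : sumRatio f x * f (x j.castSucc) ≤ f (x j.castSucc) + f (x (Fin.last n)) := by
    rw [sumRatio, Fin.sum_univ_castSucc, div_mul_eq_mul_div, div_le_iff₀ hB]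
    nlinarith [mul_le_mul_of_nonneg_left hfj (hf_pos (x (Fin.last n))).le]
  have hweight_nonneg : 0 ≤ sumRatio f x * f (x j.castSucc) :=
    mul_nonneg (div_nonneg (sum_nonneg fun _ _ => (hf_pos _).le) hB.le) (hf_pos _).le
  simp only [Pi.add_apply, norm_mul, Real.norm_of_nonneg (hf_pos _).le, mul_assoc,
    Real.norm_of_nonneg hweight_nonneg, ← mul_add]
  exact mul_le_mul_of_nonneg_left hweight (norm_nonneg _)

theorem mul_integral_prod_mul_sumRatio_mul_apply [MeasurableSpace S] {ν : Measure S}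
    [SigmaFinite ν] {q f : S → ℝ} (hq1 : ∫ s, q s ∂ν = 1) (hq : Integrable q ν)
    (hfq : Integrable (fun s => f s * q s) ν) (hf : Measurable f) (hf_pos : ∀ s, 0 < f s)
    (i : Fin n) :
    n * ∫ x, (∏ j, q (x j)) * sumRatio f x * f (x i.castSucc) ∂(Measure.pi fun _ => ν)
      = (n + 1) * ∫ s, f s * q s ∂ν := by
  have : NeZero n := ⟨i.pos.ne'⟩
  set W : (Fin (n + 1) → S) → ℝ := fun x => (∏ j, q (x j)) * sumRatio f x
  set J := univ.map (Fin.castSuccEmb (n := n))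
  have hW_swap : ∀ a ∈ J, ∀ b ∈ J, ∀ x, W (x ∘ Equiv.swap a b) = W x := by
    simp only [J, mem_map, mem_univ, true_and, Fin.coe_castSuccEmb]
    rintro _ ⟨a, rfl⟩ _ ⟨b, rfl⟩ x
    simp only [W, Equiv.prod_comp _ fun k => q (x k), Function.comp_apply]
    rw [sumRatio_comp_perm f x (Equiv.swap_apply_of_ne_of_ne (Fin.castSucc_ne_last a).symm
      (Fin.castSucc_ne_last b).symm)]
  have hW_int : ∀ j ∈ J, Integrable (fun x => W x * f (x j)) (Measure.pi fun _ => ν) := by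
    simp only [J, mem_map, mem_univ, true_and, Fin.coe_castSuccEmb]
    rintro _ ⟨j, rfl⟩
    exact integrable_prod_mul_sumRatio_mul_apply hq hfq hf hf_pos j
  have hW_sum : ∀ x, W x * ∑ j ∈ J, f (x j) = (∏ j, q (x j)) * ∑ k, f (x k) := fun x => by
    simp only [W, J, sum_map, Fin.coe_castSuccEmb]
    rw [mul_assoc, mul_comm (sumRatio f x), sum_castSucc_mul_sumRatio hf_pos x]
  calc _ = ∫ x, W x * ∑ j ∈ J, f (x j) ∂(Measure.pi fun _ => ν) := by
        rw [integral_mul_sum_apply_eq_card_mul J W f hW_swap hW_int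
          (mem_map_of_mem _ (mem_univ i))]
        simp only [J, W, card_map, card_univ, Fintype.card_fin, Fin.coe_castSuccEmb]
    _ = ∫ x : Fin (n + 1) → S, (∏ j, q (x j)) * ∑ k, f (x k) ∂(Measure.pi fun _ => ν) :=
      integral_congr_ae (ae_of_all _ hW_sum)
    _ = (n + 1) * ∫ s, f s * q s ∂ν := by
      rw [integral_prod_mul_sum_apply hq1 hq hfq, Fintype.card_fin]
      push_cast
      ring

end SumRatio

theorem v_is_normalized_density_general
    {S : Type*} [MeasurableSpace S]
    (νS : Measure S) [SigmaFinite νS]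
    (q : S → ℝ) (f : S → ℝ)  -- `f s` is `π(a|s)` for the fixed action `a`
    (hf_pos : ∀ s, 0 < f s)
    (hf_meas : Measurable f)
    (hq_norm : ∫ s, q s ∂νS = 1)
    (πa : ℝ) (hπa : πa = ∫ s, f s * q s ∂νS) (hπa_pos : 0 < πa)
    (post : S → ℝ) (hpost : ∀ s, post s = f s * q s / πa)
    (K : ℕ)
    (v : (Fin (K + 2) → S) → ℝ)
    (hv : ∀ sv, v sv =
      post (sv 0) * (∏ k ∈ Finset.univ.erase (0 : Fin (K + 2)), q (sv k)) *
        (((1 / (K + 2 : ℝ)) * ∑ k : Fin (K + 2), f (sv k)) /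
          ((1 / (K + 1 : ℝ)) * ∑ k : Fin (K + 1), f (sv k.castSucc)))) :
    ∫ sv, v sv ∂(Measure.pi fun _ : Fin (K + 2) => νS) = 1 := by
  have hq : Integrable q νS := .of_integral_ne_zero (by rw [hq_norm]; exact one_ne_zero)
  have hfq : Integrable (fun s => f s * q s) νS := .of_integral_ne_zero (hπa ▸ hπa_pos.ne')
  have hv_eq : ∀ x, v x
      = (K + 1) / ((K + 2) * πa) * ((∏ i, q (x i)) * sumRatio f x * f (x 0)) := fun x => by
    rw [hv, hpost, sumRatio, ← mul_prod_erase univ (fun i => q (x i)) (mem_univ 0)]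
    field_simp
  have hsym := mul_integral_prod_mul_sumRatio_mul_apply hq_norm hq hfq hf_meas hf_pos
    (0 : Fin (K + 1))
  rw [Fin.castSucc_zero, ← hπa] at hsym
  push_cast at hsym
  simp_rw [hv_eq]
  rw [integral_const_mul]
  field_simp
  linarith

/-- The density
`v(s⁰⁻ᴷ⁺¹ | a) = p(s⁰|a) ∏_{k=1}^{K+1} q(sᵏ) · ((1/(K+2)) ∑_{k=0}^{K+1} π(a|sᵏ)) / ((1/(K+1)) ∑_{k=0}^{K} π(a|sᵏ))`
integrates to one over the tuple `(s⁰, …, sᴷ⁺¹)`. -/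
theorem v_is_normalized_density
    {S : Type*} [MeasurableSpace S]
    (νS : Measure S) [SigmaFinite νS]
    (q : S → ℝ) (f : S → ℝ)  -- `f s` is `π(a|s)` for the fixed action `a`
    (hq_pos : ∀ s, 0 < q s) (hf_pos : ∀ s, 0 < f s)
    (hq_meas : Measurable q) (hf_meas : Measurable f)
    (hq_norm : ∫ s, q s ∂νS = 1)
    (πa : ℝ) (hπa : πa = ∫ s, f s * q s ∂νS) (hπa_pos : 0 < πa)
    (post : S → ℝ) (hpost : ∀ s, post s = f s * q s / πa)
    (K : ℕ) (hK : 0 < K)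
    (v : (Fin (K + 2) → S) → ℝ)
    (hv : ∀ sv, v sv =
      post (sv 0) * (∏ k ∈ Finset.univ.erase (0 : Fin (K + 2)), q (sv k)) *
        (((1 / (K + 2 : ℝ)) * ∑ k : Fin (K + 2), f (sv k)) /
          ((1 / (K + 1 : ℝ)) * ∑ k : Fin (K + 1), f (sv k.castSucc)))) :
    ∫ sv, v sv ∂(Measure.pi fun _ : Fin (K + 2) => νS) = 1 :=
  v_is_normalized_density_general νS q f hf_pos hf_meas hq_norm πa hπa hπa_pos post hpost K v hv
end

section
/- The $K=1$ nested entropy estimator sits between the conditional entropy and the marginal entropy: with $\widetilde{H}_1 = \mathbb{E}_{a\sim\pi}\mathbb{E}_{s^{(0)}\sim p(\cdot|a)}\mathbb{E}_{s^{(1)}\sim q}\left[-\log\left(\frac{\pi(a|s^{(0)})+\pi(a|s^{(1)})}{2}\right)\right]$, it holds that $\widetilde{H}_1 \leq H(\pi)$; moreover $\widetilde{H}_0 := \mathbb{E}_{s\sim q}\mathbb{E}_{a\sim\pi(\cdot|s)}[-\log\pi(a|s)] = \mathbb{E}_{s\sim q}[H(\pi(\cdot|s))] \leq \widetilde{H}_1$.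 -/
/-!
Both inequalities come from the tangent-line bound `t (-log t) ≤ t (-log z) + (z - t)` for the
concave function `t ↦ -t log t`, integrated against `q ⊗ q` for each fixed `a`.
For `H̃₁ ≤ H(π)`, symmetrize in `(s⁰, s¹)` so that the weight `π(a|s⁰)` becomes the midpoint
`m = (π(a|s⁰) + π(a|s¹)) / 2`, whose `q ⊗ q`-mean is `π(a)`, and take `z = π(a)`.
For `H̃₀ ≤ H̃₁`, take `t = π(a|s⁰)` and `z = m`: the correction terms `m - π(a|s⁰)` integrate to
zero. Exchanging the order of integration in `H̃₀` needs joint integrability of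
`π(a|s) q(s) (-log π(a|s))`; its positive part is dominated by the same bound with `z = π(a)`,
and its negative part is then controlled by the iterated integrability of `H̃₀`.
-/

open MeasureTheory Real

lemma mul_neg_log_le_mul_neg_log_add_sub {t z : ℝ} (ht : 0 < t) (hz : 0 < z) :
    t * -log t ≤ t * -log z + (z - t) := by
  have h := mul_le_mul_of_nonneg_left (log_le_sub_one_of_pos (div_pos hz ht)) ht.le
  rw [log_div hz.ne' ht.ne', mul_sub, mul_sub, mul_div_cancel₀ _ ht.ne'] at h
  linarith

section Product

variable {α β : Type*} [MeasurableSpace α] [MeasurableSpace β] {μ : Measure α} {ν : Measure β}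

lemma integrable_prod_mul_fst_of_integrable_mul_integral [SFinite ν] {k : α × β → ℝ} {φ : α → ℝ}
    (hk : ∀ p, 0 ≤ k p) (hmeas : AEStronglyMeasurable (fun p => k p * φ p.1) (μ.prod ν))
    (hsec : ∀ a, Integrable (fun b => k (a, b)) ν)
    (hint : Integrable (fun a => (∫ b, k (a, b) ∂ν) * φ a) μ) :
    Integrable (fun p => k p * φ p.1) (μ.prod ν) := by
  refine (integrable_prod_iff hmeas).2 ⟨.of_forall fun a => (hsec a).mul_const (φ a), ?_⟩
  refine hint.norm.congr (.of_forall fun a => ?_)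
  have hka : 0 ≤ ∫ b, k (a, b) ∂ν := integral_nonneg fun b => hk (a, b)
  simp only [norm_mul, Real.norm_eq_abs, abs_of_nonneg (hk _), integral_mul_const,
    abs_of_nonneg hka]

lemma integrable_prod_of_le_of_integrable_integral [SFinite μ] [SFinite ν] {f g : α × β → ℝ}
    (hf : AEStronglyMeasurable f (μ.prod ν)) (hg : Integrable g (μ.prod ν)) (hfg : ∀ p, f p ≤ g p)
    (hsec : ∀ b, Integrable (fun a => f (a, b)) μ)
    (hint : Integrable (fun b => ∫ a, f (a, b) ∂μ) ν) :
    Integrable f (μ.prod ν) := by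
  have hpos : Integrable (fun p => max (f p) 0) (μ.prod ν) :=
    hg.abs.mono' (hf.sup aestronglyMeasurable_const) (.of_forall fun p => by
      rw [Real.norm_of_nonneg (le_max_right _ _)]
      exact max_le ((hfg p).trans (le_abs_self _)) (abs_nonneg _))
  refine (integrable_prod_iff' hf).2 ⟨.of_forall hsec, ?_⟩
  refine ((hpos.integral_prod_right.const_mul 2).sub hint).congr (.of_forall fun b => ?_)
  have habs : ∀ x : ℝ, ‖x‖ = 2 * max x 0 - x := fun x => by
    rcases le_total x 0 with hx | hx
    · rw [Real.norm_of_nonpos hx, max_eq_right hx]; ring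
    · rw [Real.norm_of_nonneg hx, max_eq_left hx]; ring
  simp only [habs]
  rw [integral_sub ((hsec b).pos_part.const_mul 2) (hsec b), integral_const_mul]
  rfl

end Product

section Nested

variable {S : Type*} [MeasurableSpace S] {μ : Measure S} {q f : S → ℝ}

/-- For `f = π(a|·)` this is `π(a)` times the integrand of `H̃₁` at `a`, because
`π(a) p(s⁰|a) = π(a|s⁰) q(s⁰)`. -/
noncomputable def nestedEntropyIntegrand (q f : S → ℝ) (p : S × S) : ℝ :=
  f p.1 * q p.1 * q p.2 * -log ((f p.1 + f p.2) / 2)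

lemma integrable_midpoint_mul_prod (hq_int : Integrable q μ)
    (hfq : Integrable (fun s => f s * q s) μ) :
    Integrable (fun p : S × S => (f p.1 + f p.2) / 2 * (q p.1 * q p.2)) (μ.prod μ) :=
  ((hfq.mul_prod hq_int).add (hq_int.mul_prod hfq)).div_const 2 |>.congr
    (.of_forall fun p => by simp only [Pi.add_apply]; ring)

lemma integrable_nestedEntropyIntegrand_of_integrable_posterior {w : ℝ} (hw : w ≠ 0)
    (hint : Integrable (fun p : S × S =>
      f p.1 * q p.1 / w * q p.2 * -log ((f p.1 + f p.2) / 2)) (μ.prod μ)) :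
    Integrable (nestedEntropyIntegrand q f) (μ.prod μ) :=
  hint.const_mul w |>.congr (.of_forall fun p => by
    simp only [nestedEntropyIntegrand]; field_simp)

variable [SFinite μ]

lemma integral_midpoint_mul_prod (hq1 : ∫ s, q s ∂μ = 1)
    (hfq : Integrable (fun s => f s * q s) μ) :
    ∫ p : S × S, (f p.1 + f p.2) / 2 * (q p.1 * q p.2) ∂(μ.prod μ) = ∫ s, f s * q s ∂μ := by
  have hq_int : Integrable q μ := .of_integral_ne_zero (by rw [hq1]; exact one_ne_zero)
  have hsplit : (fun p : S × S => (f p.1 + f p.2) / 2 * (q p.1 * q p.2)) =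
      fun p => ((f p.1 * q p.1) * q p.2 + q p.1 * (f p.2 * q p.2)) / 2 := by
    ext p; ring
  rw [hsplit, integral_div, integral_add (hfq.mul_prod hq_int) (hq_int.mul_prod hfq),
    integral_prod_mul (fun s => f s * q s) q, integral_prod_mul q (fun s => f s * q s), hq1]
  ring

lemma integral_nestedEntropyIntegrand_le_negMulLog (hq : ∀ s, 0 ≤ q s)
    (hq1 : ∫ s, q s ∂μ = 1) (hf : ∀ s, 0 < f s) (hc : 0 < ∫ s, f s * q s ∂μ)
    (hR : Integrable (nestedEntropyIntegrand q f) (μ.prod μ)) :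
    ∫ p, nestedEntropyIntegrand q f p ∂(μ.prod μ) ≤ negMulLog (∫ s, f s * q s ∂μ) := by
  set c := ∫ s, f s * q s ∂μ
  have hq_int : Integrable q μ := .of_integral_ne_zero (by rw [hq1]; exact one_ne_zero)
  have hfq : Integrable (fun s => f s * q s) μ := .of_integral_ne_zero hc.ne'
  have hM := integrable_midpoint_mul_prod hq_int hfq
  have hqq : Integrable (fun p : S × S => c * (q p.1 * q p.2)) (μ.prod μ) :=
    (hq_int.mul_prod hq_int).const_mul c
  have hRswap : Integrable (fun p => nestedEntropyIntegrand q f p.swap) (μ.prod μ) := hR.swap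
  -- Symmetrizing in `(s₀, s₁)` turns the weight `f s₀` into the midpoint `(f s₀ + f s₁) / 2`.
  have hsymm : ∫ p, nestedEntropyIntegrand q f p ∂(μ.prod μ) =
      ∫ p : S × S, (f p.1 + f p.2) / 2 * (q p.1 * q p.2) * -log ((f p.1 + f p.2) / 2)
        ∂(μ.prod μ) := by
    calc ∫ p, nestedEntropyIntegrand q f p ∂(μ.prod μ)
        = ∫ p, (nestedEntropyIntegrand q f p + nestedEntropyIntegrand q f p.swap) / 2
            ∂(μ.prod μ) := by
          rw [integral_div, integral_add hR hRswap, integral_prod_swap]; ring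
      _ = _ := by
          congr 1; ext p
          simp only [nestedEntropyIntegrand, Prod.fst_swap, Prod.snd_swap, add_comm (f p.2)]
          ring
  have hT : Integrable (fun p : S × S =>
      (f p.1 + f p.2) / 2 * (q p.1 * q p.2) * -log ((f p.1 + f p.2) / 2)) (μ.prod μ) :=
    (hR.add hRswap).div_const 2 |>.congr (.of_forall fun p => by
      simp only [Pi.add_apply, nestedEntropyIntegrand, Prod.fst_swap, Prod.snd_swap,
        add_comm (f p.2)]
      ring)
  have hTc : Integrable (fun p : S × S => (f p.1 + f p.2) / 2 * (q p.1 * q p.2) * -log c)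
      (μ.prod μ) := hM.mul_const _
  have hgap : Integrable (fun p : S × S =>
      c * (q p.1 * q p.2) - (f p.1 + f p.2) / 2 * (q p.1 * q p.2)) (μ.prod μ) := hqq.sub hM
  rw [hsymm]
  calc _ ≤ ∫ p : S × S, ((f p.1 + f p.2) / 2 * (q p.1 * q p.2) * -log c +
          (c * (q p.1 * q p.2) - (f p.1 + f p.2) / 2 * (q p.1 * q p.2))) ∂(μ.prod μ) := by
        refine integral_mono hT (hTc.add hgap) fun p => ?_
        have hm : 0 < (f p.1 + f p.2) / 2 := by linarith [hf p.1, hf p.2]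
        have := mul_le_mul_of_nonneg_right (mul_neg_log_le_mul_neg_log_add_sub hm hc)
          (mul_nonneg (hq p.1) (hq p.2))
        linarith
    _ = negMulLog c := by
        rw [integral_add hTc hgap, integral_sub hqq hM, integral_mul_const, integral_const_mul,
          integral_prod_mul q q, hq1, integral_midpoint_mul_prod hq1 hfq, negMulLog]
        ring

lemma integral_mul_neg_log_le_integral_nestedEntropyIntegrand (hq : ∀ s, 0 ≤ q s)
    (hq1 : ∫ s, q s ∂μ = 1) (hf : ∀ s, 0 < f s) (hfq : Integrable (fun s => f s * q s) μ)
    (hℓ : Integrable (fun s => f s * q s * -log (f s)) μ)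
    (hR : Integrable (nestedEntropyIntegrand q f) (μ.prod μ)) :
    ∫ s, f s * q s * -log (f s) ∂μ ≤ ∫ p, nestedEntropyIntegrand q f p ∂(μ.prod μ) := by
  have hq_int : Integrable q μ := .of_integral_ne_zero (by rw [hq1]; exact one_ne_zero)
  have hM := integrable_midpoint_mul_prod hq_int hfq
  have hgap : Integrable (fun p : S × S =>
      (f p.1 + f p.2) / 2 * (q p.1 * q p.2) - f p.1 * q p.1 * q p.2) (μ.prod μ) :=
    hM.sub (hfq.mul_prod hq_int)
  calc ∫ s, f s * q s * -log (f s) ∂μ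
      = ∫ p : S × S, f p.1 * q p.1 * -log (f p.1) * q p.2 ∂(μ.prod μ) := by
        rw [integral_prod_mul (fun s => f s * q s * -log (f s)) q, hq1, mul_one]
    _ ≤ ∫ p : S × S, (nestedEntropyIntegrand q f p +
          ((f p.1 + f p.2) / 2 * (q p.1 * q p.2) - f p.1 * q p.1 * q p.2)) ∂(μ.prod μ) := by
        refine integral_mono (hℓ.mul_prod hq_int) (hR.add hgap) fun p => ?_
        have hm : 0 < (f p.1 + f p.2) / 2 := by linarith [hf p.1, hf p.2]
        have := mul_le_mul_of_nonneg_right (mul_neg_log_le_mul_neg_log_add_sub (hf p.1) hm)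
          (mul_nonneg (hq p.1) (hq p.2))
        simp only [nestedEntropyIntegrand]
        linarith
    _ = ∫ p, nestedEntropyIntegrand q f p ∂(μ.prod μ) := by
        rw [integral_add hR hgap, integral_sub hM (hfq.mul_prod hq_int),
          integral_midpoint_mul_prod hq1 hfq, integral_prod_mul (fun s => f s * q s) q, hq1]
        ring

lemma mul_integral_posterior_eq_integral_nestedEntropyIntegrand {w : ℝ} (hw : w ≠ 0)
    (hint : Integrable (fun p : S × S =>
      f p.1 * q p.1 / w * q p.2 * -log ((f p.1 + f p.2) / 2)) (μ.prod μ)) :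
    w * ∫ s₀, f s₀ * q s₀ / w * ∫ s₁, q s₁ * -log ((f s₀ + f s₁) / 2) ∂μ ∂μ =
      ∫ p, nestedEntropyIntegrand q f p ∂(μ.prod μ) := by
  rw [integral_prod _ (integrable_nestedEntropyIntegrand_of_integrable_posterior hw hint),
    ← integral_const_mul]
  congr 1; ext s₀
  rw [← integral_const_mul, ← integral_const_mul]
  congr 1; ext s₁
  simp only [nestedEntropyIntegrand]
  field_simp

end Nested

lemma integrable_mul_neg_log_conditional {S A : Type*} [MeasurableSpace S] [MeasurableSpace A]
    {νS : Measure S} {νA : Measure A} [SFinite νS] [SFinite νA]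
    {q : S → ℝ} {πc : A → S → ℝ} {πm : A → ℝ}
    (hq_pos : ∀ s, 0 < q s) (hπ_pos : ∀ a s, 0 < πc a s)
    (hq_meas : Measurable q) (hπ_meas : Measurable (Function.uncurry πc))
    (hq_int : Integrable q νS) (hπ_norm : ∀ s, ∫ a, πc a s ∂νA = 1)
    (hπm : ∀ a, πm a = ∫ s, πc a s * q s ∂νS) (hπm_pos : ∀ a, 0 < πm a)
    (hint_H : Integrable (fun a => πm a * log (πm a)) νA)
    (hint0 : ∀ s, Integrable (fun a => πc a s * log (πc a s)) νA)
    (hint0_out : Integrable (fun s => q s * ∫ a, πc a s * -log (πc a s) ∂νA) νS) :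
    Integrable (fun p : A × S => πc p.1 p.2 * q p.2 * -log (πc p.1 p.2)) (νA.prod νS) := by
  have hjoint_meas : Measurable fun p : A × S => πc p.1 p.2 * q p.2 :=
    hπ_meas.mul (hq_meas.comp measurable_snd)
  have hjoint : Integrable (fun p : A × S => πc p.1 p.2 * q p.2) (νA.prod νS) := by
    refine (integrable_prod_iff' hjoint_meas.aestronglyMeasurable).2
      ⟨.of_forall fun s => ?_, hq_int.congr (.of_forall fun s => ?_)⟩
    · exact (Integrable.of_integral_ne_zero (by rw [hπ_norm s]; exact one_ne_zero)).mul_const (q s)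
    · simp only [norm_mul, Real.norm_of_nonneg (hπ_pos _ s).le,
        Real.norm_of_nonneg (hq_pos s).le, integral_mul_const, hπ_norm, one_mul]
  have hπm_eq : πm = fun a => ∫ s, πc a s * q s ∂νS := funext hπm
  have hπm_int : Integrable πm νA := hπm_eq ▸ hjoint.integral_prod_left
  have hπm_meas : Measurable πm :=
    hπm_eq ▸ hjoint_meas.stronglyMeasurable.integral_prod_right'.measurable
  have hdom : Integrable (fun p : A × S => πc p.1 p.2 * q p.2 * -log (πm p.1)) (νA.prod νS) :=
    integrable_prod_mul_fst_of_integrable_mul_integral (φ := fun a => -log (πm a))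
      (fun p => (mul_pos (hπ_pos p.1 p.2) (hq_pos p.2)).le)
      (hjoint_meas.mul (measurable_log.comp (hπm_meas.comp measurable_fst)).neg).aestronglyMeasurable
      (fun a => .of_integral_ne_zero (hπm a ▸ (hπm_pos a).ne'))
      (hint_H.neg.congr (.of_forall fun a => by simp only [Pi.neg_apply, ← hπm]; ring))
  refine integrable_prod_of_le_of_integrable_integral ?_ (hdom.add (hπm_int.mul_prod hq_int))
    (fun p => ?_) (fun s => ?_) (hint0_out.congr (.of_forall fun s => ?_))
  · exact (hjoint_meas.mul
      (measurable_log.comp hπ_meas).neg).aestronglyMeasurable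
  · have := mul_le_mul_of_nonneg_right
      (mul_neg_log_le_mul_neg_log_add_sub (hπ_pos p.1 p.2) (hπm_pos p.1)) (hq_pos p.2).le
    simp only [Pi.add_apply]
    nlinarith [mul_pos (hπ_pos p.1 p.2) (hq_pos p.2)]
  · exact ((hint0 s).const_mul (-q s)).congr (.of_forall fun a => by ring)
  · simp only [← integral_const_mul]
    congr 1; ext a; ring

/-- The `K = 1` nested entropy estimator sits between the expected conditional entropy
(`K = 0` estimator) and the marginal entropy: `H̃₀ = E_{s∼q}[H(π(·|s))] ≤ H̃₁ ≤ H(π)`. -/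
theorem nested_estimator_between_conditional_and_marginal
    {S A : Type*} [MeasurableSpace S] [MeasurableSpace A]
    (νS : Measure S) (νA : Measure A) [SigmaFinite νS] [SigmaFinite νA]
    (q : S → ℝ) (πc : A → S → ℝ)
    (hq_pos : ∀ s, 0 < q s) (hπ_pos : ∀ a s, 0 < πc a s)
    (hq_meas : Measurable q) (hπ_meas : Measurable (Function.uncurry πc))
    (hq_norm : ∫ s, q s ∂νS = 1)
    (hπ_norm : ∀ s, ∫ a, πc a s ∂νA = 1)
    (πm : A → ℝ) (hπm : ∀ a, πm a = ∫ s, πc a s * q s ∂νS)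
    (hπm_pos : ∀ a, 0 < πm a)
    (post : A → S → ℝ) (hpost : ∀ a s, post a s = πc a s * q s / πm a)
    (H : ℝ) (hH : H = -∫ a, πm a * Real.log (πm a) ∂νA)
    (Ht0 : ℝ)
    (hHt0 : Ht0 = ∫ s, q s * (∫ a, πc a s * (-Real.log (πc a s)) ∂νA) ∂νS)
    (Ht1 : ℝ)
    (hHt1 : Ht1 = ∫ a, πm a *
      (∫ s0, post a s0 *
        (∫ s1, q s1 * (-Real.log ((πc a s0 + πc a s1) / 2)) ∂νS) ∂νS) ∂νA)
    (hint_H : Integrable (fun a => πm a * Real.log (πm a)) νA)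
    (hint0 : ∀ s, Integrable (fun a => πc a s * Real.log (πc a s)) νA)
    (hint0_out : Integrable
      (fun s => q s * (∫ a, πc a s * (-Real.log (πc a s)) ∂νA)) νS)
    (hint1 : ∀ a, Integrable (fun p : S × S =>
      post a p.1 * q p.2 * (-Real.log ((πc a p.1 + πc a p.2) / 2))) (νS.prod νS))
    (hint1_out : Integrable (fun a => πm a *
      (∫ s0, post a s0 *
        (∫ s1, q s1 * (-Real.log ((πc a s0 + πc a s1) / 2)) ∂νS) ∂νS)) νA) :
    Ht1 ≤ H ∧
    Ht0 = ∫ s, q s * (-∫ a, πc a s * Real.log (πc a s) ∂νA) ∂νS ∧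
    Ht0 ≤ Ht1 := by
  obtain rfl : post = fun a s => πc a s * q s / πm a := funext fun a => funext (hpost a)
  subst hH hHt0 hHt1
  have hq_int : Integrable q νS := .of_integral_ne_zero (by rw [hq_norm]; exact one_ne_zero)
  have hπq_int (a : A) : Integrable (fun s => πc a s * q s) νS :=
    .of_integral_ne_zero (hπm a ▸ (hπm_pos a).ne')
  have hnested (a : A) := mul_integral_posterior_eq_integral_nestedEntropyIntegrand
    (hπm_pos a).ne' (hint1 a)
  have hR_int (a : A) := integrable_nestedEntropyIntegrand_of_integrable_posterior
    (hπm_pos a).ne' (hint1 a)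
  have hh_int := integrable_mul_neg_log_conditional hq_pos hπ_pos hq_meas hπ_meas hq_int
    hπ_norm hπm hπm_pos hint_H hint0 hint0_out
  refine ⟨?_, by simp only [mul_neg, integral_neg], ?_⟩
  · rw [← integral_neg]
    refine integral_mono hint1_out hint_H.neg fun a => (hnested a).trans_le ?_
    have := integral_nestedEntropyIntegrand_le_negMulLog (fun s => (hq_pos s).le) hq_norm
      (hπ_pos a) (hπm a ▸ hπm_pos a) (hR_int a)
    rwa [← hπm a, negMulLog, neg_mul] at this
  · calc _ = ∫ a, ∫ s, πc a s * q s * -log (πc a s) ∂νS ∂νA := by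
          rw [integral_integral_swap hh_int]
          congr 1; ext s
          rw [← integral_const_mul]
          congr 1; ext a
          ring
      _ ≤ _ := by
          refine integral_mono_ae hh_int.integral_prod_left hint1_out ?_
          filter_upwards [hh_int.prod_right_ae] with a ha
          exact (integral_mul_neg_log_le_integral_nestedEntropyIntegrand
            (fun s => (hq_pos s).le) hq_norm (hπ_pos a) (hπq_int a) ha (hR_int a)).trans_eq
            (hnested a).symm
end
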